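/- arXiv:1603.04962 — 7 statements merged into one kernel-verified Lean document; each statement's English description precedes it below -/
import Mathlib

section
/- Let δ and ε ≠ 0 be real constants and let x₁ be a twice continuously differentiable real function on a nonempty open interval I such that for every t ∈ I: Q(t) := δ + x₁(t)² − x₁'(t)² > 0, 𝔰(t) := 1 − ε²x₁'(t)² ≠ 0, and x₁'(t) ≠ 0. Then x₁ satisfies the BH-minimal equation (x₁x₁'' + (x₁')² − 2x₁² − δ)·Φ(𝔰)/Q + 2ε²x₁x₁''·Φ'(𝔰) = 0 at every t ∈ I if and only if the function t ↦ x₁(t)·√(Q(t))·Φ(𝔰(t)) is constant on I (the first integral of the BH-minimal surface equation, with constant value the energy E). -/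
/-!
Along any `C²` curve with `Q > 0` and `𝔰 ≠ 0`, the chain rule gives
`(x₁ √Q Φ(𝔰))' = -x₁' √Q · (left-hand side of the BH-minimal equation)`.
Since `x₁' √Q` never vanishes, the equation holds on the interval exactly when the first
integral has zero derivative there, i.e. is constant on the (connected, open) interval.
-/

open Set

/-- The volume-ratio function of the Busemann–Hausdorff volume form in dimension `n = 2`. -/
noncomputable def PhiBH (s : ℝ) : ℝ := (3 * s - 2) / s ^ 2

/-- The derivative of `PhiBH`. -/
noncomputable def PhiBH' (s : ℝ) : ℝ := (4 - 3 * s) / s ^ 3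

theorem hasDerivAt_PhiBH {s : ℝ} (hs : s ≠ 0) : HasDerivAt PhiBH (PhiBH' s) s := by
  refine ((((hasDerivAt_id s).const_mul 3).sub_const 2).div (hasDerivAt_pow 2 s)
    (pow_ne_zero 2 hs)).congr_deriv ?_
  simp only [PhiBH', id_eq]
  field_simp
  ring

theorem IsOpen.exists_is_const_iff_of_hasDerivAt {𝕜 G : Type*} [RCLike 𝕜]
    [NormedAddCommGroup G] [NormedSpace 𝕜 G] {s : Set 𝕜} (hs : IsOpen s)
    (hs' : IsPreconnected s) {F F' : 𝕜 → G} (hF : ∀ t ∈ s, HasDerivAt F (F' t) t) :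
    (∃ E, ∀ t ∈ s, F t = E) ↔ ∀ t ∈ s, F' t = 0 := by
  constructor
  · rintro ⟨E, hE⟩ t ht
    have hconst : F =ᶠ[nhds t] fun _ => E := Filter.eventually_of_mem (hs.mem_nhds ht) hE
    exact (hF t ht).unique ((hasDerivAt_const t E).congr_of_eventuallyEq hconst)
  · intro hF'
    refine hs.exists_is_const_of_deriv_eq_zero hs'
      (fun t ht => (hF t ht).differentiableAt.differentiableWithinAt) fun t ht => ?_
    rw [(hF t ht).deriv, hF' t ht]
    rfl

namespace BHRotational

variable (δ ε : ℝ) (x : ℝ → ℝ) (t : ℝ)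

noncomputable def Q : ℝ := δ + x t ^ 2 - deriv x t ^ 2

noncomputable def 𝔰 : ℝ := 1 - ε ^ 2 * deriv x t ^ 2

noncomputable def firstIntegral : ℝ := x t * Real.sqrt (Q δ x t) * PhiBH (𝔰 ε x t)

noncomputable def minimalEquationLHS : ℝ :=
  (x t * deriv (deriv x) t + deriv x t ^ 2 - 2 * x t ^ 2 - δ) * PhiBH (𝔰 ε x t) / Q δ x t +
    2 * ε ^ 2 * x t * deriv (deriv x) t * PhiBH' (𝔰 ε x t)

variable {δ ε x t}

theorem hasDerivAt_Q (hx : HasDerivAt x (deriv x t) t)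
    (hx' : HasDerivAt (deriv x) (deriv (deriv x) t) t) :
    HasDerivAt (Q δ x) (2 * deriv x t * (x t - deriv (deriv x) t)) t :=
  (((hx.pow 2).const_add δ).sub (hx'.pow 2)).congr_deriv (by ring)

theorem hasDerivAt_𝔰 (hx' : HasDerivAt (deriv x) (deriv (deriv x) t) t) :
    HasDerivAt (𝔰 ε x) (-(2 * ε ^ 2 * deriv x t * deriv (deriv x) t)) t :=
  (((hx'.pow 2).const_mul (ε ^ 2)).const_sub 1).congr_deriv (by ring)

theorem hasDerivAt_firstIntegral (hx : HasDerivAt x (deriv x t) t)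
    (hx' : HasDerivAt (deriv x) (deriv (deriv x) t) t) (hQ : 0 < Q δ x t)
    (h𝔰 : 𝔰 ε x t ≠ 0) :
    HasDerivAt (firstIntegral δ ε x)
      (-(deriv x t * Real.sqrt (Q δ x t) * minimalEquationLHS δ ε x t)) t := by
  have hsqrt := (hasDerivAt_Q hx hx').sqrt hQ.ne'
  have hPhi := (hasDerivAt_PhiBH h𝔰).comp t (hasDerivAt_𝔰 hx')
  refine ((hx.mul hsqrt).mul hPhi).congr_deriv ?_
  have hroot : Real.sqrt (Q δ x t) ^ 2 = δ + x t ^ 2 - deriv x t ^ 2 := Real.sq_sqrt hQ.le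
  have hroot0 : Real.sqrt (Q δ x t) ≠ 0 := (Real.sqrt_pos.2 hQ).ne'
  simp only [minimalEquationLHS, Function.comp_apply, Pi.mul_apply]
  generalize Real.sqrt (Q δ x t) = S at hroot hroot0 ⊢
  rw [show Q δ x t = S ^ 2 from hroot.symm]
  field_simp
  linear_combination (deriv x t * PhiBH (𝔰 ε x t)) * hroot

end BHRotational

open BHRotational in
theorem stmt_0_general (δ ε a b : ℝ) (x₁ : ℝ → ℝ)
    (hx₁ : ContDiffOn ℝ 2 x₁ (Ioo a b))
    (hQ : ∀ t ∈ Ioo a b, 0 < δ + x₁ t ^ 2 - deriv x₁ t ^ 2)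
    (hs : ∀ t ∈ Ioo a b, 1 - ε ^ 2 * deriv x₁ t ^ 2 ≠ 0)
    (hd : ∀ t ∈ Ioo a b, deriv x₁ t ≠ 0) :
    (∀ t ∈ Ioo a b,
        (x₁ t * deriv (deriv x₁) t + deriv x₁ t ^ 2 - 2 * x₁ t ^ 2 - δ) *
            PhiBH (1 - ε ^ 2 * deriv x₁ t ^ 2) / (δ + x₁ t ^ 2 - deriv x₁ t ^ 2) +
          2 * ε ^ 2 * x₁ t * deriv (deriv x₁) t * PhiBH' (1 - ε ^ 2 * deriv x₁ t ^ 2) = 0) ↔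
      ∃ E : ℝ, ∀ t ∈ Ioo a b,
        x₁ t * Real.sqrt (δ + x₁ t ^ 2 - deriv x₁ t ^ 2) *
          PhiBH (1 - ε ^ 2 * deriv x₁ t ^ 2) = E := by
  have hx : ∀ t ∈ Ioo a b, HasDerivAt x₁ (deriv x₁ t) t := fun t ht =>
    ((hx₁.differentiableOn two_ne_zero).differentiableAt (isOpen_Ioo.mem_nhds ht)).hasDerivAt
  have hx' : ∀ t ∈ Ioo a b, HasDerivAt (deriv x₁) (deriv (deriv x₁) t) t := fun t ht =>
    (((hx₁.deriv_of_isOpen (m := 1) isOpen_Ioo (by norm_num)).differentiableOn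
      one_ne_zero).differentiableAt (isOpen_Ioo.mem_nhds ht)).hasDerivAt
  have hF : ∀ t ∈ Ioo a b, HasDerivAt (firstIntegral δ ε x₁)
      (-(deriv x₁ t * Real.sqrt (Q δ x₁ t) * minimalEquationLHS δ ε x₁ t)) t := fun t ht =>
    hasDerivAt_firstIntegral (hx t ht) (hx' t ht) (hQ t ht) (hs t ht)
  refine (forall₂_congr fun t ht => ?_).trans
    (isOpen_Ioo.exists_is_const_iff_of_hasDerivAt isPreconnected_Ioo hF).symm
  have hfactor : deriv x₁ t * Real.sqrt (Q δ x₁ t) ≠ 0 :=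
    mul_ne_zero (hd t ht) (Real.sqrt_pos.2 (hQ t ht)).ne'
  rw [neg_eq_zero, mul_eq_zero, or_iff_right hfactor]
  rfl

/-- The BH-minimal equation for rotational surfaces has the first integral
`x₁ · √(δ + x₁² − x₁'²) · Φ(1 − ε²x₁'²) = E`. -/
theorem stmt_0 (δ ε a b : ℝ) (hε : ε ≠ 0) (hab : a < b) (x₁ : ℝ → ℝ)
    (hx₁ : ContDiffOn ℝ 2 x₁ (Ioo a b))
    (hQ : ∀ t ∈ Ioo a b, 0 < δ + x₁ t ^ 2 - deriv x₁ t ^ 2)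
    (hs : ∀ t ∈ Ioo a b, 1 - ε ^ 2 * deriv x₁ t ^ 2 ≠ 0)
    (hd : ∀ t ∈ Ioo a b, deriv x₁ t ≠ 0) :
    (∀ t ∈ Ioo a b,
        (x₁ t * deriv (deriv x₁) t + deriv x₁ t ^ 2 - 2 * x₁ t ^ 2 - δ) *
            PhiBH (1 - ε ^ 2 * deriv x₁ t ^ 2) / (δ + x₁ t ^ 2 - deriv x₁ t ^ 2) +
          2 * ε ^ 2 * x₁ t * deriv (deriv x₁) t * PhiBH' (1 - ε ^ 2 * deriv x₁ t ^ 2) = 0) ↔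
      ∃ E : ℝ, ∀ t ∈ Ioo a b,
        x₁ t * Real.sqrt (δ + x₁ t ^ 2 - deriv x₁ t ^ 2) *
          PhiBH (1 - ε ^ 2 * deriv x₁ t ^ 2) = E :=
  stmt_0_general δ ε a b x₁ hx₁ hQ hs hd
end

section
/- Let δ ∈ {1, −1}, ε ≠ 0, and let x₁(t) = c₁t + c₂ be an affine function satisfying, on some nondegenerate interval I, Q(t) ≠ 0, 𝔰(t) ≠ 0, Φ(𝔰(t)) ≠ 0, and the BH-minimal equation. Then c₁ = 0 and 2c₂² + δ = 0. In particular no such affine solution exists when δ = 1, and none exists when δ = −1 with |x₁(t)| > 1 on I; hence on such intervals a solution x₁ of the BH-minimal equation with Φ(𝔰) ≠ 0 cannot have constant derivative. -/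
open Set

/-- An affine solution `x₁ = c₁ t + c₂` of the BH-minimal equation with `Φ(𝔰) ≠ 0` forces
`c₁ = 0` and `2c₂² + δ = 0`; in particular none exists for `δ = 1`, nor for `δ = -1`
with `|x₁| > 1` on the interval. -/
theorem stmt_1 (δ ε c₁ c₂ a b : ℝ) (hδ : δ = 1 ∨ δ = -1) (hε : ε ≠ 0) (hab : a < b)
    (x₁ : ℝ → ℝ) (hx₁ : ∀ t, x₁ t = c₁ * t + c₂)
    (hQ : ∀ t ∈ Ioo a b, δ + x₁ t ^ 2 - deriv x₁ t ^ 2 ≠ 0)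
    (hs : ∀ t ∈ Ioo a b, 1 - ε ^ 2 * deriv x₁ t ^ 2 ≠ 0)
    (hPhi : ∀ t ∈ Ioo a b, PhiBH (1 - ε ^ 2 * deriv x₁ t ^ 2) ≠ 0)
    (heq : ∀ t ∈ Ioo a b,
      (x₁ t * deriv (deriv x₁) t + deriv x₁ t ^ 2 - 2 * x₁ t ^ 2 - δ) *
          PhiBH (1 - ε ^ 2 * deriv x₁ t ^ 2) / (δ + x₁ t ^ 2 - deriv x₁ t ^ 2) +
        2 * ε ^ 2 * x₁ t * deriv (deriv x₁) t * PhiBH' (1 - ε ^ 2 * deriv x₁ t ^ 2) = 0) :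
    c₁ = 0 ∧ 2 * c₂ ^ 2 + δ = 0 ∧ δ ≠ 1 ∧
      (δ = -1 → ¬ ∀ t ∈ Ioo a b, 1 < |x₁ t|) := by
  have hx : x₁ = fun t => c₁ * t + c₂ := funext hx₁
  have hd : deriv x₁ = fun _ => c₁ := by
    funext t
    rw [hx]
    have : HasDerivAt (fun t : ℝ => c₁ * t + c₂) c₁ t := by
      simpa using ((hasDerivAt_id t).const_mul c₁).add_const c₂
    exact this.deriv
  have hdd : deriv (deriv x₁) = fun _ => (0 : ℝ) := by
    rw [hd]; funext t; simp
  -- key equation at each point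
  have key : ∀ t ∈ Ioo a b, c₁ ^ 2 - 2 * (c₁ * t + c₂) ^ 2 - δ = 0 := by
    intro t ht
    have h := heq t ht
    simp only [hd, hx₁, deriv_const', mul_zero, zero_mul] at h
    have h' : (c₁ ^ 2 - 2 * (c₁ * t + c₂) ^ 2 - δ) *
        PhiBH (1 - ε ^ 2 * c₁ ^ 2) / (δ + (c₁ * t + c₂) ^ 2 - c₁ ^ 2) = 0 := by
      rw [← h]; ring_nf
    have hQ' := hQ t ht
    simp only [hd, hx₁] at hQ'
    have hPhi' := hPhi t ht
    simp only [hd] at hPhi'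
    rcases div_eq_zero_iff.mp h' with h'' | h''
    · rcases mul_eq_zero.mp h'' with h3 | h3
      · exact h3
      · exact absurd h3 hPhi'
    · exact absurd h'' hQ'
  set m : ℝ := (a + b) / 2 with hm
  set h₀ : ℝ := (b - a) / 4 with hh
  have hh0 : 0 < h₀ := by simp [hh]; linarith
  have hm1 : m ∈ Ioo a b := ⟨by simp [hm]; linarith, by simp [hm]; linarith⟩
  have hm0 : m - h₀ ∈ Ioo a b := ⟨by simp [hm, hh]; linarith, by simp [hm, hh]; linarith⟩
  have hm2 : m + h₀ ∈ Ioo a b := ⟨by simp [hm, hh]; linarith, by simp [hm, hh]; linarith⟩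
  have k0 := key _ hm0
  have k1 := key _ hm1
  have k2 := key _ hm2
  have hc₁ : c₁ = 0 := by
    have hsq : c₁ ^ 2 * h₀ ^ 2 = 0 := by nlinarith [k0, k1, k2]
    have : c₁ ^ 2 = 0 := by
      rcases mul_eq_zero.mp hsq with h | h
      · exact h
      · exact absurd h (by positivity)
    exact pow_eq_zero_iff (by norm_num) |>.mp this
  have hc₂ : 2 * c₂ ^ 2 + δ = 0 := by
    rw [hc₁] at k1; nlinarith [k1]
  refine ⟨hc₁, hc₂, ?_, ?_⟩
  · intro h1
    rw [h1] at hc₂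
    nlinarith [sq_nonneg c₂]
  · intro hδ1 hall
    have := hall m hm1
    rw [hx₁ m, hc₁] at this
    simp only [zero_mul, zero_add] at this
    rw [hδ1] at hc₂
    nlinarith [sq_abs c₂, this]
end

section
/- Let δ be real, ε ≠ 0, c ∈ ℝ and σ ∈ {1, −1}, and define x₁(t) := σt/(√3 ε) + c. Then 𝔰(t) = 2/3 for all t, Φ(𝔰(t)) = 0, and x₁ satisfies the BH-minimal equation at every t with Q(t) ≠ 0. -/
/-!
`Φ` vanishes exactly at `s = 2/3`, and a line of slope `±1/(√3 ε)` has `𝔰 ≡ 1 - 1/3 = 2/3`.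
Along such a line `x₁'' = 0` as well, so both terms of the BH-minimal equation vanish.
-/

theorem PhiBH_two_thirds : PhiBH (2 / 3) = 0 := by
  norm_num [PhiBH]

theorem deriv_eq_const_of_eq_affine {x : ℝ → ℝ} {a c : ℝ} (hx : ∀ t, x t = a * t + c) :
    deriv x = fun _ => a := by
  obtain rfl : x = fun t => a * t + c := funext hx
  funext t
  simp

theorem one_sub_sq_mul_div_sqrt_three_mul_sq {ε σ : ℝ} (hε : ε ≠ 0) (hσ : σ ^ 2 = 1) :
    1 - ε ^ 2 * (σ / (Real.sqrt 3 * ε)) ^ 2 = 2 / 3 := by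
  have h3 : Real.sqrt 3 ^ 2 = 3 := Real.sq_sqrt (by norm_num)
  rw [div_pow, mul_pow, h3, hσ]
  field_simp
  norm_num

/-- For `x₁(t) = σt/(√3 ε) + c` one has `𝔰 ≡ 2/3`, `Φ(𝔰) = 0`, and `x₁` satisfies the
BH-minimal equation wherever `Q ≠ 0`. -/
theorem stmt_2 (δ ε c σ : ℝ) (hε : ε ≠ 0) (hσ : σ = 1 ∨ σ = -1)
    (x₁ : ℝ → ℝ) (hx₁ : ∀ t, x₁ t = σ * t / (Real.sqrt 3 * ε) + c) :
    (∀ t : ℝ, 1 - ε ^ 2 * deriv x₁ t ^ 2 = 2 / 3) ∧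
    (∀ t : ℝ, PhiBH (1 - ε ^ 2 * deriv x₁ t ^ 2) = 0) ∧
    (∀ t : ℝ, δ + x₁ t ^ 2 - deriv x₁ t ^ 2 ≠ 0 →
      (x₁ t * deriv (deriv x₁) t + deriv x₁ t ^ 2 - 2 * x₁ t ^ 2 - δ) *
          PhiBH (1 - ε ^ 2 * deriv x₁ t ^ 2) / (δ + x₁ t ^ 2 - deriv x₁ t ^ 2) +
        2 * ε ^ 2 * x₁ t * deriv (deriv x₁) t * PhiBH' (1 - ε ^ 2 * deriv x₁ t ^ 2) = 0) := by
  have hσ2 : σ ^ 2 = 1 := by rcases hσ with rfl | rfl <;> norm_num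
  have hd : deriv x₁ = fun _ => σ / (Real.sqrt 3 * ε) :=
    deriv_eq_const_of_eq_affine (c := c) fun t => by rw [hx₁]; ring
  have hdd : deriv (deriv x₁) = 0 := by
    rw [hd]
    exact deriv_const' _
  have hs : ∀ t, 1 - ε ^ 2 * deriv x₁ t ^ 2 = 2 / 3 := fun t => by
    rw [hd]
    exact one_sub_sq_mul_div_sqrt_three_mul_sq hε hσ2
  have hΦ : ∀ t, PhiBH (1 - ε ^ 2 * deriv x₁ t ^ 2) = 0 := fun t => by
    rw [hs, PhiBH_two_thirds]
  refine ⟨hs, hΦ, fun t _ => ?_⟩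
  simp [hΦ t, hdd]
end

section
/- If x₁ is a differentiable real function on a nonempty open interval I satisfying x₁'(t)² = 1 + x₁(t)² for all t ∈ I, then there exists c ∈ ℝ such that either x₁(t) = sinh(t + c) for all t ∈ I, or x₁(t) = −sinh(t + c) for all t ∈ I. -/
open Set

/-!
Since `(x₁')² = 1 + x₁² > 0`, the derivative never vanishes, so by Darboux's theorem it has a
constant sign on the interval. Replacing `x₁` by `-x₁` if necessary, `x₁' = √(1 + x₁²)`, so
`arsinh ∘ x₁` has derivative `1` and is therefore `t ↦ t + c`.
-/

namespace Real

theorem exists_eq_sinh_add_of_hasDerivAt_sqrt {s : Set ℝ} (hs : IsOpen s) (hs' : IsPreconnected s)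
    {f : ℝ → ℝ} (hf : ∀ t ∈ s, HasDerivAt f √(1 + f t ^ 2) t) :
    ∃ c, ∀ t ∈ s, f t = sinh (t + c) := by
  have harsinh : ∀ t ∈ s, HasDerivAt (arsinh ∘ f) 1 t := fun t ht ↦ by
    have hpos : 0 < √(1 + f t ^ 2) := sqrt_pos.2 (by positivity)
    simpa [inv_mul_cancel₀ hpos.ne'] using (hasDerivAt_arsinh (f t)).comp t (hf t ht)
  obtain ⟨c, hc⟩ := hs.exists_eq_add_of_deriv_eq hs'
    (fun t ht ↦ (harsinh t ht).differentiableAt.differentiableWithinAt)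
    differentiableOn_id (fun t ht ↦ by simp [(harsinh t ht).deriv])
  refine ⟨c, fun t ht ↦ ?_⟩
  rw [← sinh_arsinh (f t)]
  exact congrArg sinh (hc ht)

theorem exists_eq_sinh_add_or_eq_neg_sinh_add {s : Set ℝ} (hs : IsOpen s)
    (hs' : IsPreconnected s) {f f' : ℝ → ℝ} (hf : ∀ t ∈ s, HasDerivAt f (f' t) t)
    (hode : ∀ t ∈ s, f' t ^ 2 = 1 + f t ^ 2) :
    ∃ c, (∀ t ∈ s, f t = sinh (t + c)) ∨ (∀ t ∈ s, f t = -sinh (t + c)) := by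
  have hsqrt : ∀ t ∈ s, √(1 + f t ^ 2) = |f' t| := fun t ht ↦ by
    rw [← hode t ht, sqrt_sq_eq_abs]
  have hne : ∀ t ∈ s, f' t ≠ 0 := fun t ht h0 ↦ by
    have := hode t ht
    rw [h0] at this
    nlinarith [sq_nonneg (f t)]
  rcases hasDerivWithinAt_forall_lt_or_forall_gt_of_forall_ne
    (isPreconnected_iff_ordConnected.1 hs').convex (fun t ht ↦ (hf t ht).hasDerivWithinAt)
    hne with hneg | hpos
  · obtain ⟨c, hc⟩ := exists_eq_sinh_add_of_hasDerivAt_sqrt hs hs' (f := -f) fun t ht ↦ by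
      rw [Pi.neg_apply, neg_sq, hsqrt t ht, abs_of_neg (hneg t ht)]
      exact (hf t ht).neg
    exact ⟨c, Or.inr fun t ht ↦ by rw [← hc t ht, Pi.neg_apply, neg_neg]⟩
  · obtain ⟨c, hc⟩ := exists_eq_sinh_add_of_hasDerivAt_sqrt hs hs' fun t ht ↦ by
      rw [hsqrt t ht, abs_of_pos (hpos t ht)]
      exact hf t ht
    exact ⟨c, Or.inl hc⟩

end Real

theorem stmt_4_general (a b : ℝ) (x₁ : ℝ → ℝ)
    (hdiff : DifferentiableOn ℝ x₁ (Ioo a b))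
    (hode : ∀ t ∈ Ioo a b, deriv x₁ t ^ 2 = 1 + x₁ t ^ 2) :
    ∃ c : ℝ, (∀ t ∈ Ioo a b, x₁ t = Real.sinh (t + c)) ∨
      (∀ t ∈ Ioo a b, x₁ t = -Real.sinh (t + c)) :=
  Real.exists_eq_sinh_add_or_eq_neg_sinh_add isOpen_Ioo isPreconnected_Ioo
    (fun _ ht ↦ (hdiff.differentiableAt (isOpen_Ioo.mem_nhds ht)).hasDerivAt) hode

/-- The nontrivial solutions of `1 + x₁² − (x₁')² = 0` are `x₁(t) = ± sinh(t + c)`. -/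
theorem stmt_4 (a b : ℝ) (hab : a < b) (x₁ : ℝ → ℝ)
    (hdiff : DifferentiableOn ℝ x₁ (Ioo a b))
    (hode : ∀ t ∈ Ioo a b, deriv x₁ t ^ 2 = 1 + x₁ t ^ 2) :
    ∃ c : ℝ, (∀ t ∈ Ioo a b, x₁ t = Real.sinh (t + c)) ∨
      (∀ t ∈ Ioo a b, x₁ t = -Real.sinh (t + c)) :=
  stmt_4_general a b x₁ hdiff hode
end

section
/- If x₁ is a differentiable real function on a nonempty open interval I satisfying |x₁(t)| > 1 and x₁'(t)² = x₁(t)² − 1 for all t ∈ I, then there exists c ∈ ℝ such that either x₁(t) = cosh(t + c) for all t ∈ I, or x₁(t) = −cosh(t + c) for all t ∈ I. -/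
/-!
On an interval where `x > 1`, put `y = arcosh ∘ x`. Then `y' = x' / √(x² - 1)`, so the equation
`x'² = x² - 1` says exactly `y'² = 1`. By Darboux's theorem `y'` cannot jump between `1` and `-1`,
so `y = ± t + c` and `x = cosh (± t + c)`, which is `cosh (t ± c)` since `cosh` is even.
The case `x < -1` reduces to this one through `-x`, and a continuous `x` with `|x| > 1` on an
interval has one of the two signs throughout.
-/

open Set Real

theorem HasDerivAt.arcosh {f : ℝ → ℝ} {f' t : ℝ} (hf : HasDerivAt f f' t) (ht : 1 < f t) :
    HasDerivAt (fun s => arcosh (f s)) (f' / √(f t ^ 2 - 1)) t := by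
  rw [div_eq_inv_mul]
  exact (hasDerivAt_arcosh ht).comp t hf

section OpenConvex

variable {s : Set ℝ} (hs : IsOpen s) (hs' : Convex ℝ s) {f : ℝ → ℝ} (hf : DifferentiableOn ℝ f s)
include hs hs' hf

theorem exists_eqOn_add_or_eqOn_neg_add_of_deriv_sq_eq_one (hf' : ∀ t ∈ s, deriv f t ^ 2 = 1) :
    ∃ c, EqOn f (· + c) s ∨ EqOn f (fun t => -t + c) s := by
  have hderiv : ∀ t ∈ s, HasDerivWithinAt f (deriv f t) s t := fun t ht =>
    ((hf t ht).differentiableAt (hs.mem_nhds ht)).hasDerivAt.hasDerivWithinAt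
  have hne : ∀ t ∈ s, deriv f t ≠ 0 := fun t ht h => by simpa [h] using hf' t ht
  rcases hasDerivWithinAt_forall_lt_or_forall_gt_of_forall_ne hs' hderiv hne with hneg | hpos
  · obtain ⟨c, hc⟩ := hs.exists_eq_add_of_deriv_eq hs'.isPreconnected hf
      differentiable_neg.differentiableOn fun t ht => by
        rw [deriv_neg]
        nlinarith [hf' t ht, hneg t ht]
    exact ⟨c, Or.inr hc⟩
  · obtain ⟨c, hc⟩ := hs.exists_eq_add_of_deriv_eq hs'.isPreconnected hf
      differentiable_id.differentiableOn fun t ht => by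
        rw [deriv_id]
        nlinarith [hf' t ht, hpos t ht]
    exact ⟨c, Or.inl hc⟩

theorem exists_eqOn_cosh_add_of_deriv_sq_eq_sq_sub_one (hgt : ∀ t ∈ s, 1 < f t)
    (hode : ∀ t ∈ s, deriv f t ^ 2 = f t ^ 2 - 1) :
    ∃ c, EqOn f (fun t => cosh (t + c)) s := by
  have hderiv : ∀ t ∈ s, HasDerivAt (fun t => arcosh (f t)) (deriv f t / √(f t ^ 2 - 1)) t :=
    fun t ht => ((hf t ht).differentiableAt (hs.mem_nhds ht)).hasDerivAt.arcosh (hgt t ht)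
  have hunit : ∀ t ∈ s, deriv (fun t => arcosh (f t)) t ^ 2 = 1 := fun t ht => by
    have hpos : 0 < f t ^ 2 - 1 := by nlinarith [hgt t ht]
    rw [(hderiv t ht).deriv, div_pow, sq_sqrt hpos.le, hode t ht, div_self hpos.ne']
  have hcosh : ∀ t ∈ s, cosh (arcosh (f t)) = f t := fun t ht => cosh_arcosh (hgt t ht).le
  obtain ⟨c, hc | hc⟩ := exists_eqOn_add_or_eqOn_neg_add_of_deriv_sq_eq_one hs hs'
    (fun t ht => (hderiv t ht).differentiableAt.differentiableWithinAt) hunit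
  · exact ⟨c, fun t ht => by rw [← hcosh t ht, show arcosh (f t) = t + c from hc ht]⟩
  · refine ⟨-c, fun t ht => ?_⟩
    rw [← hcosh t ht, show arcosh (f t) = -t + c from hc ht, ← cosh_neg, neg_add, neg_neg]

end OpenConvex

theorem stmt_5_general (a b : ℝ) (x₁ : ℝ → ℝ)
    (hdiff : DifferentiableOn ℝ x₁ (Ioo a b))
    (hbig : ∀ t ∈ Ioo a b, 1 < |x₁ t|)
    (hode : ∀ t ∈ Ioo a b, deriv x₁ t ^ 2 = x₁ t ^ 2 - 1) :
    ∃ c : ℝ, (∀ t ∈ Ioo a b, x₁ t = Real.cosh (t + c)) ∨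
      (∀ t ∈ Ioo a b, x₁ t = -Real.cosh (t + c)) := by
  have hcont := hdiff.continuousOn
  rcases isPreconnected_Ioo.eq_or_eq_neg_of_sq_eq hcont hcont.abs
    (fun t _ => (sq_abs (x₁ t)).symm) (fun ht => (one_pos.trans (hbig _ ht)).ne') with hpos | hneg
  · obtain ⟨c, hc⟩ := exists_eqOn_cosh_add_of_deriv_sq_eq_sq_sub_one isOpen_Ioo (convex_Ioo a b)
      hdiff (fun t ht => hpos ht ▸ hbig t ht) hode
    exact ⟨c, Or.inl hc⟩
  · obtain ⟨c, hc⟩ := exists_eqOn_cosh_add_of_deriv_sq_eq_sq_sub_one isOpen_Ioo (convex_Ioo a b)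
      hdiff.neg (fun t ht => show 1 < -x₁ t by
        linarith [hbig t ht, show x₁ t = -|x₁ t| from hneg ht])
      (fun t ht => by rw [deriv.neg, Pi.neg_apply, neg_sq, neg_sq, hode t ht])
    exact ⟨c, Or.inr fun t ht => neg_eq_iff_eq_neg.mp (hc ht)⟩

/-- The nontrivial solutions of `−1 + x₁² − (x₁')² = 0` with `|x₁| > 1` are
`x₁(t) = ± cosh(t + c)`. -/
theorem stmt_5 (a b : ℝ) (hab : a < b) (x₁ : ℝ → ℝ)
    (hdiff : DifferentiableOn ℝ x₁ (Ioo a b))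
    (hbig : ∀ t ∈ Ioo a b, 1 < |x₁ t|)
    (hode : ∀ t ∈ Ioo a b, deriv x₁ t ^ 2 = x₁ t ^ 2 - 1) :
    ∃ c : ℝ, (∀ t ∈ Ioo a b, x₁ t = Real.cosh (t + c)) ∨
      (∀ t ∈ Ioo a b, x₁ t = -Real.cosh (t + c)) :=
  stmt_5_general a b x₁ hdiff hbig hode
end

section
/- For the rotational surface of spherical type X, for all t ∈ I and θ ∈ ℝ: ⟨X(t,θ), X(t,θ)⟩_L = −1 and the first component of X(t,θ) is positive (so X takes values in H³); moreover ⟨∂X/∂t, ∂X/∂t⟩_L = 1 (t is hyperbolic arc length), ⟨∂X/∂t, ∂X/∂θ⟩_L = 0, and ⟨∂X/∂θ, ∂X/∂θ⟩_L = x₁(t)², i.e., the induced first fundamental form is diag(1, x₁²). -/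
open Set

/-- The Lorentzian inner product on `ℝ⁴`. -/
noncomputable def lor (p q : ℝ × ℝ × ℝ × ℝ) : ℝ :=
  -(p.1 * q.1) + p.2.1 * q.2.1 + p.2.2.1 * q.2.2.1 + p.2.2.2 * q.2.2.2

/-- `φ(t) = ∫₀ᵗ √(1 + x₁² − x₁'²)/(1 + x₁²) dσ` for the spherical-type rotational surface. -/
noncomputable def sphPhi (x₁ : ℝ → ℝ) (t : ℝ) : ℝ :=
  ∫ σ in (0:ℝ)..t, Real.sqrt (1 + x₁ σ ^ 2 - deriv x₁ σ ^ 2) / (1 + x₁ σ ^ 2)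

/-- The rotational surface of spherical type
`X(t,θ) = (√(1+x₁²)·cosh φ, √(1+x₁²)·sinh φ, x₁ cos θ, x₁ sin θ)`. -/
noncomputable def sphX (x₁ : ℝ → ℝ) (t θ : ℝ) : ℝ × ℝ × ℝ × ℝ :=
  (Real.sqrt (1 + x₁ t ^ 2) * Real.cosh (sphPhi x₁ t),
   Real.sqrt (1 + x₁ t ^ 2) * Real.sinh (sphPhi x₁ t),
   x₁ t * Real.cos θ, x₁ t * Real.sin θ)

/-!
Write `X = (r cosh φ, r sinh φ, z cos θ, z sin θ)`. Because `cosh² − sinh² = 1 = cos² + sin²`,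
the Lorentzian products of `X`, `∂X/∂t` and `∂X/∂θ` collapse to `z² − r²`, `r²φ'² − r'² + z'²`,
`0` and `z²`. For `r = √(1 + x₁²)` one has `r r' = x₁ x₁'`, and the fundamental theorem of
calculus gives `r² φ' = √(1 + x₁² − x₁'²)`, so these are `−1`, `1`, `0` and `x₁²`.
-/

noncomputable def hypRotPoint (r φ z θ : ℝ) : ℝ × ℝ × ℝ × ℝ :=
  (r * Real.cosh φ, r * Real.sinh φ, z * Real.cos θ, z * Real.sin θ)

lemma sphX_eq_hypRotPoint (x₁ : ℝ → ℝ) (t θ : ℝ) :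
    sphX x₁ t θ = hypRotPoint (Real.sqrt (1 + x₁ t ^ 2)) (sphPhi x₁ t) (x₁ t) θ := rfl

lemma lor_hypRotPoint_self (r φ z θ : ℝ) :
    lor (hypRotPoint r φ z θ) (hypRotPoint r φ z θ) = z ^ 2 - r ^ 2 := by
  simp only [lor, hypRotPoint]
  linear_combination (-r ^ 2) * Real.cosh_sq_sub_sinh_sq φ + z ^ 2 * Real.sin_sq_add_cos_sq θ

lemma hasDerivAt_hypRotPoint_curve {r φ z : ℝ → ℝ} {r' φ' z' t : ℝ} (θ : ℝ)
    (hr : HasDerivAt r r' t) (hφ : HasDerivAt φ φ' t) (hz : HasDerivAt z z' t) :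
    HasDerivAt (fun s => hypRotPoint (r s) (φ s) (z s) θ)
      (r' * Real.cosh (φ t) + r t * (Real.sinh (φ t) * φ'),
        r' * Real.sinh (φ t) + r t * (Real.cosh (φ t) * φ'),
        z' * Real.cos θ, z' * Real.sin θ) t :=
  (hr.mul hφ.cosh).prodMk ((hr.mul hφ.sinh).prodMk ((hz.mul_const _).prodMk (hz.mul_const _)))

lemma hasDerivAt_hypRotPoint_angle (r φ z θ : ℝ) :
    HasDerivAt (fun ψ => hypRotPoint r φ z ψ) (0, 0, z * -Real.sin θ, z * Real.cos θ) θ :=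
  (hasDerivAt_const θ _).prodMk ((hasDerivAt_const θ _).prodMk
    (((Real.hasDerivAt_cos θ).const_mul z).prodMk ((Real.hasDerivAt_sin θ).const_mul z)))

lemma lor_hypRotPoint_curve_tangent_self (r r' φ φ' z' θ : ℝ) :
    lor (r' * Real.cosh φ + r * (Real.sinh φ * φ'),
        r' * Real.sinh φ + r * (Real.cosh φ * φ'), z' * Real.cos θ, z' * Real.sin θ)
      (r' * Real.cosh φ + r * (Real.sinh φ * φ'),
        r' * Real.sinh φ + r * (Real.cosh φ * φ'), z' * Real.cos θ, z' * Real.sin θ)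
      = r ^ 2 * φ' ^ 2 - r' ^ 2 + z' ^ 2 := by
  simp only [lor]
  linear_combination (r ^ 2 * φ' ^ 2 - r' ^ 2) * Real.cosh_sq_sub_sinh_sq φ
    + z' ^ 2 * Real.sin_sq_add_cos_sq θ

lemma lor_hypRotPoint_curve_tangent_angle_tangent (r r' φ φ' z z' θ : ℝ) :
    lor (r' * Real.cosh φ + r * (Real.sinh φ * φ'),
        r' * Real.sinh φ + r * (Real.cosh φ * φ'), z' * Real.cos θ, z' * Real.sin θ)
      (0, 0, z * -Real.sin θ, z * Real.cos θ) = 0 := by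
  simp only [lor]
  ring

lemma lor_hypRotPoint_angle_tangent_self (z θ : ℝ) :
    lor (0, 0, z * -Real.sin θ, z * Real.cos θ) (0, 0, z * -Real.sin θ, z * Real.cos θ)
      = z ^ 2 := by
  simp only [lor]
  linear_combination z ^ 2 * Real.sin_sq_add_cos_sq θ

lemma HasDerivAt.sqrt_one_add_sq {f : ℝ → ℝ} {f' t : ℝ} (hf : HasDerivAt f f' t) :
    HasDerivAt (fun s => Real.sqrt (1 + f s ^ 2)) (f t * f' / Real.sqrt (1 + f t ^ 2)) t := by
  have hA : 1 + f t ^ 2 ≠ 0 := by positivity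
  convert ((hf.fun_pow 2).const_add 1).sqrt hA using 1
  field_simp
  ring

lemma hasDerivAt_sphPhi {a b t : ℝ} {x₁ : ℝ → ℝ} (h0 : (0 : ℝ) ∈ Ioo a b) (ht : t ∈ Ioo a b)
    (hx₁ : ContinuousOn x₁ (Ioo a b)) (hx₁' : ContinuousOn (deriv x₁) (Ioo a b)) :
    HasDerivAt (sphPhi x₁) (Real.sqrt (1 + x₁ t ^ 2 - deriv x₁ t ^ 2) / (1 + x₁ t ^ 2)) t := by
  have hcont : ContinuousOn
      (fun σ => Real.sqrt (1 + x₁ σ ^ 2 - deriv x₁ σ ^ 2) / (1 + x₁ σ ^ 2)) (Ioo a b) :=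
    (Real.continuous_sqrt.comp_continuousOn
      ((continuousOn_const.add (hx₁.pow 2)).sub (hx₁'.pow 2))).div
      (continuousOn_const.add (hx₁.pow 2)) fun σ _ => by positivity
  exact intervalIntegral.integral_hasDerivAt_right
    ((hcont.mono (ordConnected_Ioo.uIcc_subset h0 ht)).intervalIntegrable)
    (hcont.stronglyMeasurableAtFilter isOpen_Ioo t ht)
    (hcont.continuousAt (Ioo_mem_nhds ht.1 ht.2))

lemma sph_speed_sq_eq_one {u u' : ℝ} (hQ : 0 ≤ 1 + u ^ 2 - u' ^ 2) :
    Real.sqrt (1 + u ^ 2) ^ 2 * (Real.sqrt (1 + u ^ 2 - u' ^ 2) / (1 + u ^ 2)) ^ 2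
      - (u * u' / Real.sqrt (1 + u ^ 2)) ^ 2 + u' ^ 2 = 1 := by
  have hA : 0 < 1 + u ^ 2 := by positivity
  rw [div_pow, div_pow, Real.sq_sqrt hA.le, Real.sq_sqrt hQ]
  field_simp
  ring

/-- The rotational surface of spherical type lies in `H³`, `t` is hyperbolic arc length,
and the induced first fundamental form is `diag(1, x₁²)`. -/
theorem stmt_6 (a b : ℝ) (h0 : (0:ℝ) ∈ Ioo a b) (x₁ : ℝ → ℝ)
    (hx₁ : ContDiffOn ℝ 2 x₁ (Ioo a b))
    (hQ : ∀ t ∈ Ioo a b, 0 < 1 + x₁ t ^ 2 - deriv x₁ t ^ 2) :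
    ∀ t ∈ Ioo a b, ∀ θ : ℝ,
      lor (sphX x₁ t θ) (sphX x₁ t θ) = -1 ∧
      0 < (sphX x₁ t θ).1 ∧
      lor (deriv (fun s => sphX x₁ s θ) t) (deriv (fun s => sphX x₁ s θ) t) = 1 ∧
      lor (deriv (fun s => sphX x₁ s θ) t) (deriv (fun ψ => sphX x₁ t ψ) θ) = 0 ∧
      lor (deriv (fun ψ => sphX x₁ t ψ) θ) (deriv (fun ψ => sphX x₁ t ψ) θ) = x₁ t ^ 2 := by
  intro t ht θ
  have hx₁t : HasDerivAt x₁ (deriv x₁ t) t :=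
    ((hx₁.differentiableOn (by norm_num)).differentiableAt (Ioo_mem_nhds ht.1 ht.2)).hasDerivAt
  have hφ := hasDerivAt_sphPhi h0 ht hx₁.continuousOn
    (hx₁.continuousOn_deriv_of_isOpen isOpen_Ioo (by norm_num))
  have hXt : HasDerivAt (fun s => sphX x₁ s θ) _ t :=
    hasDerivAt_hypRotPoint_curve θ hx₁t.sqrt_one_add_sq hφ hx₁t
  have hXθ : HasDerivAt (fun ψ => sphX x₁ t ψ) _ θ := hasDerivAt_hypRotPoint_angle _ _ _ θ
  rw [hXt.deriv, hXθ.deriv, sphX_eq_hypRotPoint]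
  refine ⟨?_, by unfold hypRotPoint; positivity, ?_,
    lor_hypRotPoint_curve_tangent_angle_tangent .., lor_hypRotPoint_angle_tangent_self ..⟩
  · rw [lor_hypRotPoint_self, Real.sq_sqrt (by positivity)]
    ring
  · rw [lor_hypRotPoint_curve_tangent_self]
    exact sph_speed_sq_eq_one (hQ t ht).le
end

section
/- For the rotational surface of hyperbolic type X, for all t ∈ I and θ ∈ ℝ: ⟨X(t,θ), X(t,θ)⟩_L = −1 and the first component of X(t,θ) is positive (so X takes values in H³); moreover ⟨∂X/∂t, ∂X/∂t⟩_L = 1 (t is hyperbolic arc length), ⟨∂X/∂t, ∂X/∂θ⟩_L = 0, and ⟨∂X/∂θ, ∂X/∂θ⟩_L = x₁(t)², i.e., the induced first fundamental form is diag(1, x₁²). -/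
open Set

/-- `φ(t) = ∫₀ᵗ √(−1 + x₁² − x₁'²)/(x₁² − 1) dσ` for the hyperbolic-type rotational surface. -/
noncomputable def hypPhi (x₁ : ℝ → ℝ) (t : ℝ) : ℝ :=
  ∫ σ in (0:ℝ)..t, Real.sqrt (-1 + x₁ σ ^ 2 - deriv x₁ σ ^ 2) / (x₁ σ ^ 2 - 1)

/-- The rotational surface of hyperbolic type
`X(t,θ) = (x₁ cosh θ, x₁ sinh θ, √(x₁²−1)·cos φ, √(x₁²−1)·sin φ)`. -/
noncomputable def hypX (x₁ : ℝ → ℝ) (t θ : ℝ) : ℝ × ℝ × ℝ × ℝ :=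
  (x₁ t * Real.cosh θ, x₁ t * Real.sinh θ,
   Real.sqrt (x₁ t ^ 2 - 1) * Real.cos (hypPhi x₁ t),
   Real.sqrt (x₁ t ^ 2 - 1) * Real.sin (hypPhi x₁ t))

/-!
Write `X = (x cosh θ, x sinh θ, ρ cos φ, ρ sin φ)` with `ρ = √(x² − 1)`. Then `⟨X, X⟩ = −x² + ρ² = −1`,
`∂_θ X = (x sinh θ, x cosh θ, 0, 0)` has square `x²` and is orthogonal to `∂_t X`, and
`⟨∂_t X, ∂_t X⟩ = −x'² + ρ'² + ρ²φ'²`. Since `ρρ' = xx'` and `φ' = √(x² − 1 − x'²)/(x² − 1)`, this is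
`(−x'²(x² − 1) + x²x'² + x² − 1 − x'²)/(x² − 1) = 1`.
-/

open Real

lemma lor_self_polar (α ρ θ φ : ℝ) :
    lor (α * cosh θ, α * sinh θ, ρ * cos φ, ρ * sin φ)
      (α * cosh θ, α * sinh θ, ρ * cos φ, ρ * sin φ) = -α ^ 2 + ρ ^ 2 := by
  simp only [lor]
  linear_combination (-α ^ 2) * cosh_sq_sub_sinh_sq θ + ρ ^ 2 * cos_sq_add_sin_sq φ

lemma lor_self_polar_velocity (α' ρ ρ' θ φ φ' : ℝ) :
    lor (α' * cosh θ, α' * sinh θ, ρ' * cos φ - ρ * φ' * sin φ, ρ' * sin φ + ρ * φ' * cos φ)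
      (α' * cosh θ, α' * sinh θ, ρ' * cos φ - ρ * φ' * sin φ, ρ' * sin φ + ρ * φ' * cos φ)
      = -α' ^ 2 + ρ' ^ 2 + (ρ * φ') ^ 2 := by
  simp only [lor]
  linear_combination (-α' ^ 2) * cosh_sq_sub_sinh_sq θ
    + (ρ' ^ 2 + (ρ * φ') ^ 2) * cos_sq_add_sin_sq φ

lemma lor_polar_velocity_boost (α' β ρ ρ' θ φ φ' : ℝ) :
    lor (α' * cosh θ, α' * sinh θ, ρ' * cos φ - ρ * φ' * sin φ, ρ' * sin φ + ρ * φ' * cos φ)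
      (β * sinh θ, β * cosh θ, 0, 0) = 0 := by
  simp only [lor]
  ring

lemma lor_self_boost (β θ : ℝ) :
    lor (β * sinh θ, β * cosh θ, 0, 0) (β * sinh θ, β * cosh θ, 0, 0) = β ^ 2 := by
  simp only [lor]
  linear_combination β ^ 2 * cosh_sq_sub_sinh_sq θ

lemma hasDerivAt_polar {α ρ φ : ℝ → ℝ} {α' ρ' φ' t : ℝ} (θ : ℝ) (hα : HasDerivAt α α' t)
    (hρ : HasDerivAt ρ ρ' t) (hφ : HasDerivAt φ φ' t) :
    HasDerivAt (fun s => (α s * cosh θ, α s * sinh θ, ρ s * cos (φ s), ρ s * sin (φ s)))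
      (α' * cosh θ, α' * sinh θ, ρ' * cos (φ t) - ρ t * φ' * sin (φ t),
        ρ' * sin (φ t) + ρ t * φ' * cos (φ t)) t :=
  (hα.mul_const _).prodMk <| (hα.mul_const _).prodMk <|
    ((hρ.mul hφ.cos).congr_deriv (by ring)).prodMk ((hρ.mul hφ.sin).congr_deriv (by ring))

lemma hasDerivAt_boost (β p q θ : ℝ) :
    HasDerivAt (fun ψ => (β * cosh ψ, β * sinh ψ, p, q)) (β * sinh θ, β * cosh θ, 0, 0) θ :=
  ((hasDerivAt_cosh θ).const_mul β).prodMk <| ((hasDerivAt_sinh θ).const_mul β).prodMk <|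
    (hasDerivAt_const θ p).prodMk (hasDerivAt_const θ q)

lemma hasDerivAt_sqrt_sq_sub_one {x : ℝ → ℝ} {x' t : ℝ} (hx : HasDerivAt x x' t)
    (ht : x t ^ 2 - 1 ≠ 0) :
    HasDerivAt (fun s => √(x s ^ 2 - 1)) (x t * x' / √(x t ^ 2 - 1)) t :=
  (((hx.pow 2).sub_const 1).sqrt ht).congr_deriv (by simp only [Pi.pow_apply]; field_simp; ring)

lemma hasDerivAt_hypPhi {a b t : ℝ} {x₁ : ℝ → ℝ} (h0 : (0 : ℝ) ∈ Ioo a b) (ht : t ∈ Ioo a b)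
    (hx₁ : ContDiffOn ℝ 1 x₁ (Ioo a b)) (hbig : ∀ t ∈ Ioo a b, 1 < x₁ t) :
    HasDerivAt (hypPhi x₁) (√(-1 + x₁ t ^ 2 - deriv x₁ t ^ 2) / (x₁ t ^ 2 - 1)) t := by
  have hcont : ContinuousOn
      (fun σ => √(-1 + x₁ σ ^ 2 - deriv x₁ σ ^ 2) / (x₁ σ ^ 2 - 1)) (Ioo a b) := by
    have hdx := hx₁.continuousOn_deriv_of_isOpen isOpen_Ioo le_rfl
    refine ((continuousOn_const.add (hx₁.continuousOn.pow 2)).sub (hdx.pow 2)).sqrt.div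
      ((hx₁.continuousOn.pow 2).sub continuousOn_const) fun σ hσ => ?_
    nlinarith [hbig σ hσ]
  exact intervalIntegral.integral_hasDerivAt_right
    ((hcont.mono ((ordConnected_Ioo).uIcc_subset h0 ht)).intervalIntegrable)
    (hcont.stronglyMeasurableAtFilter isOpen_Ioo t ht)
    (hcont.continuousAt (isOpen_Ioo.mem_nhds ht))

lemma arclength_identity {x x' ρ S : ℝ} (hρ : ρ ^ 2 = x ^ 2 - 1) (hρ0 : ρ ≠ 0)
    (hS : S ^ 2 = -1 + x ^ 2 - x' ^ 2) :
    -x' ^ 2 + (x * x' / ρ) ^ 2 + (ρ * (S / (x ^ 2 - 1))) ^ 2 = 1 := by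
  rw [← hρ]
  field_simp
  linear_combination (-x' ^ 2 - 1) * hρ + hS

/-- The rotational surface of hyperbolic type lies in `H³`, `t` is hyperbolic arc length,
and the induced first fundamental form is `diag(1, x₁²)`. -/
theorem stmt_7 (a b : ℝ) (h0 : (0:ℝ) ∈ Ioo a b) (x₁ : ℝ → ℝ)
    (hx₁ : ContDiffOn ℝ 2 x₁ (Ioo a b))
    (hbig : ∀ t ∈ Ioo a b, 1 < x₁ t)
    (hQ : ∀ t ∈ Ioo a b, 0 < -1 + x₁ t ^ 2 - deriv x₁ t ^ 2) :
    ∀ t ∈ Ioo a b, ∀ θ : ℝ,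
      lor (hypX x₁ t θ) (hypX x₁ t θ) = -1 ∧
      0 < (hypX x₁ t θ).1 ∧
      lor (deriv (fun s => hypX x₁ s θ) t) (deriv (fun s => hypX x₁ s θ) t) = 1 ∧
      lor (deriv (fun s => hypX x₁ s θ) t) (deriv (fun ψ => hypX x₁ t ψ) θ) = 0 ∧
      lor (deriv (fun ψ => hypX x₁ t ψ) θ) (deriv (fun ψ => hypX x₁ t ψ) θ) = x₁ t ^ 2 := by
  intro t ht θ
  have hx : 1 < x₁ t := hbig t ht
  have hρ2 : √(x₁ t ^ 2 - 1) ^ 2 = x₁ t ^ 2 - 1 := sq_sqrt (by nlinarith)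
  have hdx : HasDerivAt x₁ (deriv x₁ t) t :=
    ((hx₁.differentiableOn two_ne_zero).differentiableAt (isOpen_Ioo.mem_nhds ht)).hasDerivAt
  have hXt : HasDerivAt (fun s => hypX x₁ s θ) _ t :=
    hasDerivAt_polar θ hdx (hasDerivAt_sqrt_sq_sub_one hdx (by nlinarith))
      (hasDerivAt_hypPhi h0 ht (hx₁.of_le one_le_two) hbig)
  have hXθ : HasDerivAt (fun ψ => hypX x₁ t ψ) _ θ := hasDerivAt_boost _ _ _ θ
  rw [hXt.deriv, hXθ.deriv]
  refine ⟨(lor_self_polar _ _ _ _).trans (by linarith), by simp only [hypX]; positivity,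
    (lor_self_polar_velocity _ _ _ _ _ _).trans ?_, lor_polar_velocity_boost _ _ _ _ _ _ _,
    lor_self_boost _ _⟩
  exact arclength_identity hρ2 (sqrt_pos.2 (by nlinarith)).ne' (sq_sqrt (hQ t ht).le)
end
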